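/- arXiv:1607.02972 — 4 statements merged into one kernel-verified Lean document; each statement's English description precedes it below -/
import Mathlib

section
/- If B, C ∈ ℝ^{n×n}, λ ∈ [0,1], and det is evaluated along the segment t ↦ det(tB + (1-t)C), then under the hypothesis rank(B - C) = 1, the function t ↦ det(tB + (1-t)C) is affine in t; in particular det(λB + (1-λ)C) = λ det(B) + (1-λ) det(C). -/
open Matrix

namespace Matrix

variable {K m n : Type*} [Field K] [Fintype n]

theorem exists_eq_vecMulVec_of_rank_le_one {A : Matrix m n K} (hA : A.rank ≤ 1) :
    ∃ u : m → K, ∃ v : n → K, A = vecMulVec u v := by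
  classical
  obtain ⟨u, hu⟩ := finrank_le_one_iff.mp hA
  have hcol : ∀ j, Aᵀ j ∈ LinearMap.range A.mulVecLin := fun j =>
    ⟨Pi.single j 1, by ext i; simp [mulVec_single]⟩
  choose v hv using fun j => hu ⟨_, hcol j⟩
  refine ⟨u, v, ?_⟩
  ext i j
  simpa [vecMulVec_apply, mul_comm] using (congrFun (congrArg Subtype.val (hv j)) i).symm

variable [DecidableEq n]

/-- Subtracting multiples of a pivot row `k` with `u k ≠ 0` from the other rows leaves `t` in
row `k` only, where the determinant is linear. -/
theorem exists_det_add_smul_vecMulVec_eq (C : Matrix n n K) (u v : n → K) :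
    ∃ a b : K, ∀ t : K, (C + t • vecMulVec u v).det = a * t + b := by
  by_cases hu : u = 0
  · exact ⟨0, C.det, fun t => by simp [hu]⟩
  obtain ⟨k, hk⟩ : ∃ k, u k ≠ 0 := Function.ne_iff.mp hu
  set D : Matrix n n K := of fun i => C i - (u i / u k) • C k
  refine ⟨u k * (D.updateRow k v).det, (D.updateRow k (C k)).det, fun t => ?_⟩
  have hrow : (C + t • vecMulVec u v).det = (D.updateRow k (C k + (t * u k) • v)).det := by
    refine det_eq_of_forall_row_eq_smul_add_const (Function.update (fun i => u i / u k) k 0) k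
      (by simp) fun i j => ?_
    rcases eq_or_ne i k with rfl | hik
    · simp only [add_apply, smul_apply, vecMulVec_apply, smul_eq_mul, updateRow_self,
        Pi.add_apply, Pi.smul_apply, Function.update_self, zero_mul, add_zero]
      ring
    · simp only [add_apply, smul_apply, vecMulVec_apply, smul_eq_mul, ne_eq, hik,
        not_false_eq_true, updateRow_ne, of_apply, Pi.sub_apply, Pi.smul_apply,
        Function.update_of_ne, updateRow_self, Pi.add_apply, D]
      field_simp
      ring
  rw [hrow, det_updateRow_add, det_updateRow_smul]
  ring

end Matrix

theorem stmt_4 (n : ℕ) (B C : Matrix (Fin n) (Fin n) ℝ)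
    (h : (B - C).rank = 1) :
    (∃ a b : ℝ, ∀ t : ℝ, (t • B + (1 - t) • C).det = a * t + b) ∧
    ∀ lam : ℝ, lam ∈ Set.Icc (0 : ℝ) 1 →
      (lam • B + (1 - lam) • C).det = lam * B.det + (1 - lam) * C.det := by
  obtain ⟨u, v, huv⟩ := exists_eq_vecMulVec_of_rank_le_one h.le
  obtain ⟨a, b, hab⟩ := C.exists_det_add_smul_vecMulVec_eq u v
  have hline : ∀ t : ℝ, (t • B + (1 - t) • C).det = a * t + b := fun t => by
    rw [← hab, ← huv]
    congr 1
    module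
  have hB : B.det = a + b := by simpa using hline 1
  have hC : C.det = b := by simpa using hline 0
  refine ⟨⟨a, b, hline⟩, fun lam _ => ?_⟩
  rw [hline, hB, hC]
  ring
end

section
/- There exists a constant C > 0 depending only on ε' ∈ (0,1) such that for every natural number j ≥ 1 and every sequence M₁ ≤ M₂ ≤ ... ≤ M_{j-1} of nonnegative reals, ∑_{r=1}^{j-1} M_r ∑_{s=0}^{r-1} (s+2)^{-2} (r-s)^{-2+ε'} ≤ C ∑_{ℓ=1}^{j-1} M_ℓ ℓ^{-2+ε'}. -/
/-!
Write `p = 2 - ε'`. Since `(s + 2) + (r - s) ≥ r`, one of the two factors of a term of the inner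
sum has its base at least `r / 2`, so the term is at most `4 r^(-p)` times the other factor. Hence
the inner sum is at most `4 r^(-p)` times `∑ (s + 2)^(-2) + ∑ (r - s)^(-p)`, and both of these are
bounded by the convergent series `∑ (n + 1)^(-p)`. The inequality then holds term by term in `r`.
-/

open Finset Real

lemma rpow_neg_le_two_rpow_mul_rpow_neg {x r p : ℝ} (hr : 0 < r) (hrx : r ≤ 2 * x) (hp : 0 ≤ p) :
    x ^ (-p) ≤ 2 ^ p * r ^ (-p) :=
  calc x ^ (-p) ≤ (r / 2) ^ (-p) := rpow_le_rpow_of_nonpos (by positivity) (by linarith) (by linarith)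
    _ = 2 ^ p * r ^ (-p) := by
      rw [div_rpow hr.le zero_le_two, rpow_neg zero_le_two, div_inv_eq_mul, mul_comm]

lemma rpow_neg_mul_rpow_neg_le {x y r p q : ℝ} (hx : 0 ≤ x) (hy : 0 ≤ y) (hr : 1 ≤ r)
    (hrxy : r ≤ x + y) (hp : 0 ≤ p) (hpq : p ≤ q) :
    x ^ (-q) * y ^ (-p) ≤ 2 ^ q * r ^ (-p) * (x ^ (-q) + y ^ (-p)) := by
  have hxq : 0 ≤ x ^ (-q) := rpow_nonneg hx _
  have hyp : 0 ≤ y ^ (-p) := rpow_nonneg hy _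
  have hrp : 0 ≤ 2 ^ q * r ^ (-p) := by positivity
  rcases le_total r (2 * y) with hry | hyr
  · have hy_le : y ^ (-p) ≤ 2 ^ q * r ^ (-p) :=
      (rpow_neg_le_two_rpow_mul_rpow_neg (by linarith) hry hp).trans <|
        mul_le_mul_of_nonneg_right (rpow_le_rpow_of_exponent_le one_le_two hpq) (by positivity)
    nlinarith [mul_le_mul_of_nonneg_left hy_le hxq]
  · have hx_le : x ^ (-q) ≤ 2 ^ q * r ^ (-p) :=
      (rpow_neg_le_two_rpow_mul_rpow_neg (by linarith) (by linarith) (hp.trans hpq)).trans <|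
        mul_le_mul_of_nonneg_left (rpow_le_rpow_of_exponent_le hr (neg_le_neg hpq)) (by positivity)
    nlinarith [mul_le_mul_of_nonneg_right hx_le hyp]

lemma summable_nat_add_one_rpow_neg {p : ℝ} (hp : 1 < p) :
    Summable fun n : ℕ => ((n : ℝ) + 1) ^ (-p) := by
  have := (summable_nat_add_iff 1).mpr (summable_nat_rpow.mpr (by linarith : -p < -1))
  simpa only [Nat.cast_add, Nat.cast_one] using this

lemma sum_range_nat_add_one_rpow_neg_le_tsum {p : ℝ} (hp : 1 < p) (n : ℕ) :
    ∑ s ∈ range n, ((s : ℝ) + 1) ^ (-p) ≤ ∑' k : ℕ, ((k : ℝ) + 1) ^ (-p) :=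
  (summable_nat_add_one_rpow_neg hp).sum_le_tsum _ fun k _ => rpow_nonneg (by positivity) _

lemma sum_range_sub_rpow_eq (p : ℝ) (r : ℕ) :
    ∑ s ∈ range r, ((r : ℝ) - s) ^ p = ∑ s ∈ range r, ((s : ℝ) + 1) ^ p := by
  rw [← sum_range_reflect (fun s => ((s : ℝ) + 1) ^ p) r]
  refine sum_congr rfl fun s hs => ?_
  have hsr : s + 1 ≤ r := mem_range.mp hs
  rw [show r - 1 - s = r - (s + 1) by omega, Nat.cast_sub hsr]
  push_cast
  ring_nf

lemma sum_range_convolution_le {p : ℝ} (hp1 : 1 < p) (hp2 : p ≤ 2) (r : ℕ) :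
    ∑ s ∈ range r, ((s : ℝ) + 2) ^ (-2 : ℝ) * ((r : ℝ) - s) ^ (-p)
      ≤ 8 * (∑' k : ℕ, ((k : ℝ) + 1) ^ (-p)) * (r : ℝ) ^ (-p) := by
  set T := ∑' k : ℕ, ((k : ℝ) + 1) ^ (-p)
  have hfirst : ∑ s ∈ range r, ((s : ℝ) + 2) ^ (-2 : ℝ) ≤ T := by
    refine (sum_le_sum fun s _ => ?_).trans (sum_range_nat_add_one_rpow_neg_le_tsum hp1 r)
    calc ((s : ℝ) + 2) ^ (-2 : ℝ) ≤ ((s : ℝ) + 1) ^ (-2 : ℝ) :=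
          rpow_le_rpow_of_nonpos (by positivity) (by linarith) (by norm_num)
      _ ≤ ((s : ℝ) + 1) ^ (-p) :=
          rpow_le_rpow_of_exponent_le (by linarith [s.cast_nonneg (α := ℝ)]) (by linarith)
  have hsecond : ∑ s ∈ range r, ((r : ℝ) - s) ^ (-p) ≤ T := by
    rw [sum_range_sub_rpow_eq]
    exact sum_range_nat_add_one_rpow_neg_le_tsum hp1 r
  have hterm : ∀ s ∈ range r, ((s : ℝ) + 2) ^ (-2 : ℝ) * ((r : ℝ) - s) ^ (-p)
      ≤ 2 ^ (2 : ℝ) * (r : ℝ) ^ (-p) * (((s : ℝ) + 2) ^ (-2 : ℝ) + ((r : ℝ) - s) ^ (-p)) := by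
    intro s hs
    have hsr : (s : ℝ) + 1 ≤ r := by exact_mod_cast mem_range.mp hs
    exact rpow_neg_mul_rpow_neg_le (by positivity) (by linarith) (by linarith [s.cast_nonneg (α := ℝ)])
      (by linarith) (by linarith) hp2
  calc _ ≤ ∑ s ∈ range r,
          2 ^ (2 : ℝ) * (r : ℝ) ^ (-p) * (((s : ℝ) + 2) ^ (-2 : ℝ) + ((r : ℝ) - s) ^ (-p)) :=
        sum_le_sum hterm
    _ = 4 * (r : ℝ) ^ (-p) *
          (∑ s ∈ range r, ((s : ℝ) + 2) ^ (-2 : ℝ) + ∑ s ∈ range r, ((r : ℝ) - s) ^ (-p)) := by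
        rw [← mul_sum, sum_add_distrib]
        norm_num
    _ ≤ 4 * (r : ℝ) ^ (-p) * (T + T) := by gcongr
    _ = 8 * T * (r : ℝ) ^ (-p) := by ring

theorem stmt_7 (ε' : ℝ) (hε : ε' ∈ Set.Ioo (0 : ℝ) 1) :
    ∃ C > 0, ∀ j : ℕ, 1 ≤ j → ∀ M : ℕ → ℝ,
      (∀ r, 0 ≤ M r) → Monotone M →
      ∑ r ∈ Finset.Icc 1 (j - 1),
          M r * ∑ s ∈ Finset.range r, ((s : ℝ) + 2) ^ (-2 : ℝ) * ((r : ℝ) - s) ^ (-2 + ε')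
        ≤ C * ∑ l ∈ Finset.Icc 1 (j - 1), M l * (l : ℝ) ^ (-2 + ε') := by
  obtain ⟨hε0, hε1⟩ := hε
  have hexp : -2 + ε' = -(2 - ε') := by ring
  set T := ∑' k : ℕ, ((k : ℝ) + 1) ^ (-(2 - ε'))
  have hT : 0 < T :=
    (summable_nat_add_one_rpow_neg (by linarith)).tsum_pos (fun k => rpow_nonneg (by positivity) _)
      0 (by simp)
  refine ⟨8 * T, by positivity, fun j _ M hM _ => ?_⟩
  rw [mul_sum]
  refine sum_le_sum fun r _ => ?_
  rw [hexp, mul_left_comm]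
  exact mul_le_mul_of_nonneg_left (sum_range_convolution_le (by linarith) (by linarith) r) (hM r)
end

section
/- Let n, m₁ be natural numbers with n - m₁ ≥ 2, let k, i ≥ 1, and let σ₁, ..., σ_{n-m₁} be real numbers with |σ_j - (k+1)^{-1}| < (k+1)^{-2}/4 for each j. Define λ₁ = ∏_{j=1}^{n-m₁} (i+1-σ_j)/(i+1-(k+2)^{-1}). Then there is a constant C depending only on n and m₁ with 1 - λ₁ ≤ C k^{-2} i^{-1}. -/
/-!
Each factor lies in `[0, 1]`, and it falls short of `1` by `(σ_j - (k+2)⁻¹) / (i + 1 - (k+2)⁻¹)`.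
Since `σ_j - (k+2)⁻¹ < (k+1)⁻¹(k+2)⁻¹ + (k+1)⁻²/4 ≤ 2 k⁻²` and the denominator is at least `i`,
each defect is at most `2 k⁻² i⁻¹`. The Weierstrass product inequality
`1 - ∏ f_j ≤ ∑ (1 - f_j)` then gives the bound with `C = 2 (n - m₁)`.
-/

open Finset

theorem Finset.one_sub_prod_le_sum_one_sub {ι R : Type*} [CommRing R] [LinearOrder R]
    [IsStrictOrderedRing R] (s : Finset ι) {f : ι → R} (h0 : ∀ j ∈ s, 0 ≤ f j)
    (h1 : ∀ j ∈ s, f j ≤ 1) : 1 - ∏ j ∈ s, f j ≤ ∑ j ∈ s, (1 - f j) := by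
  classical
  induction s using Finset.induction with
  | empty => simp
  | insert a s ha ih =>
    rw [prod_insert ha, sum_insert ha]
    have h0' : ∀ j ∈ s, 0 ≤ f j := fun j hj ↦ h0 j (mem_insert_of_mem hj)
    have h1' : ∀ j ∈ s, f j ≤ 1 := fun j hj ↦ h1 j (mem_insert_of_mem hj)
    have hP : ∏ j ∈ s, f j ≤ 1 := prod_le_one h0' h1'
    have ha1 : f a ≤ 1 := h1 a (mem_insert_self a s)
    -- `1 - a P = (1 - a) + (1 - P) - (1 - a)(1 - P)`
    nlinarith [ih h0' h1', mul_nonneg (sub_nonneg.2 ha1) (sub_nonneg.2 hP)]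

section NearInvSucc

variable {k σ : ℝ} (hσ : |σ - (k + 1)⁻¹| < ((k + 1) ^ 2)⁻¹ / 4)
include hσ

theorem inv_add_two_lt_of_abs_sub_inv_succ_lt (hk : 0 ≤ k) : (k + 2)⁻¹ < σ := by
  have hgap : (k + 2)⁻¹ + ((k + 1) ^ 2)⁻¹ / 4 ≤ (k + 1)⁻¹ := by
    rw [← sub_nonneg]
    have : (k + 1)⁻¹ - ((k + 2)⁻¹ + ((k + 1) ^ 2)⁻¹ / 4) =
        (3 * k + 2) / (4 * (k + 1) ^ 2 * (k + 2)) := by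
      field_simp
      ring
    rw [this]
    positivity
  linarith [(abs_lt.1 hσ).1]

theorem sub_inv_add_two_lt_of_abs_sub_inv_succ_lt (hk : 0 < k) :
    σ - (k + 2)⁻¹ < 2 * (k ^ 2)⁻¹ := by
  have hgap : (k + 1)⁻¹ + ((k + 1) ^ 2)⁻¹ / 4 - (k + 2)⁻¹ ≤ 2 * (k ^ 2)⁻¹ := by
    rw [← sub_nonneg]
    have : 2 * (k ^ 2)⁻¹ - ((k + 1)⁻¹ + ((k + 1) ^ 2)⁻¹ / 4 - (k + 2)⁻¹) =
        (3 * k ^ 3 + 26 * k ^ 2 + 40 * k + 16) / (4 * k ^ 2 * (k + 1) ^ 2 * (k + 2)) := by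
      field_simp
      ring
    rw [this]
    positivity
  linarith [(abs_lt.1 hσ).2]

theorem lt_one_of_abs_sub_inv_succ_lt (hk : 1 ≤ k) : σ < 1 := by
  have h1 : (k + 1)⁻¹ ≤ 2⁻¹ := inv_anti₀ (by norm_num) (by linarith)
  have h2 : ((k + 1) ^ 2)⁻¹ ≤ 1 := inv_le_one_of_one_le₀ (by nlinarith)
  linarith [(abs_lt.1 hσ).2]

variable {x : ℝ}

theorem div_inv_add_two_mem_Icc (hx : 0 ≤ x) (hk : 1 ≤ k) :
    (x + 1 - σ) / (x + 1 - (k + 2)⁻¹) ∈ Set.Icc 0 1 := by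
  have hσ0 := inv_add_two_lt_of_abs_sub_inv_succ_lt hσ (by linarith)
  have hσ1 := lt_one_of_abs_sub_inv_succ_lt hσ hk
  have hD : 0 < x + 1 - (k + 2)⁻¹ := by linarith
  exact ⟨div_nonneg (by linarith) hD.le, (div_le_one hD).2 (by linarith)⟩

theorem one_sub_div_inv_add_two_le (hx : 0 < x) (hk : 0 < k) :
    1 - (x + 1 - σ) / (x + 1 - (k + 2)⁻¹) ≤ 2 * (k ^ 2)⁻¹ * x⁻¹ := by
  have hk2 : (k + 2)⁻¹ ≤ 1 := inv_le_one_of_one_le₀ (by linarith)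
  have hD : x ≤ x + 1 - (k + 2)⁻¹ := by linarith
  rw [one_sub_div (by linarith), show x + 1 - (k + 2)⁻¹ - (x + 1 - σ) = σ - (k + 2)⁻¹ by ring,
    ← div_eq_mul_inv]
  exact div_le_div₀ (by positivity) (sub_inv_add_two_lt_of_abs_sub_inv_succ_lt hσ hk).le hx hD

end NearInvSucc

theorem stmt_11 (n m₁ : ℕ) (h : m₁ + 2 ≤ n) :
    ∃ C > 0, ∀ k i : ℕ, 1 ≤ k → 1 ≤ i →
      ∀ σ : Fin (n - m₁) → ℝ,
        (∀ j, |σ j - ((k : ℝ) + 1)⁻¹| < (((k : ℝ) + 1) ^ 2)⁻¹ / 4) →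
        1 - ∏ j, (((i : ℝ) + 1 - σ j) / ((i : ℝ) + 1 - ((k : ℝ) + 2)⁻¹))
          ≤ C * ((k : ℝ) ^ 2)⁻¹ * (i : ℝ)⁻¹ := by
  have hN : 0 < n - m₁ := by omega
  refine ⟨2 * (n - m₁ : ℕ), by positivity, fun k i hk hi σ hσ ↦ ?_⟩
  have hk : (1 : ℝ) ≤ k := by exact_mod_cast hk
  have hi : (0 : ℝ) < i := by exact_mod_cast hi
  calc 1 - ∏ j, ((i + 1 - σ j) / (i + 1 - ((k : ℝ) + 2)⁻¹))
      ≤ ∑ j, (1 - (i + 1 - σ j) / (i + 1 - ((k : ℝ) + 2)⁻¹)) :=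
        one_sub_prod_le_sum_one_sub _ (fun j _ ↦ (div_inv_add_two_mem_Icc (hσ j) hi.le hk).1)
          (fun j _ ↦ (div_inv_add_two_mem_Icc (hσ j) hi.le hk).2)
    _ ≤ ∑ _j : Fin (n - m₁), 2 * ((k : ℝ) ^ 2)⁻¹ * (i : ℝ)⁻¹ :=
        sum_le_sum fun j _ ↦ one_sub_div_inv_add_two_le (hσ j) hi (by linarith)
    _ = 2 * (n - m₁ : ℕ) * ((k : ℝ) ^ 2)⁻¹ * (i : ℝ)⁻¹ := by
        rw [sum_const, card_univ, Fintype.card_fin, nsmul_eq_mul]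
        ring
end

section
/- Let n ≥ 3 and A = diag(k^{-1}, k^{-1}, i) be a 3×3 diagonal matrix with k, i ≥ 1 integers. Setting μ = (i - k^{-1})/(i - (k+1)^{-1}), one has the decomposition A = μ² D₁ + μ(1-μ) D₂ + (1-μ) D₃ where D₁ = diag((k+1)^{-1}, (k+1)^{-1}, i), D₂ = diag((k+1)^{-1}, i, i), D₃ = diag(i, k^{-1}, i); moreover μ² + μ(1-μ) + (1-μ) = 1, all coefficients are nonnegative, rank(D₂ - D₁) = 1, and rank(diag((k+1)^{-1}, k^{-1}, i) - D₃) = 1. -/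
lemma rank_diag_one (w : Fin 3 → ℝ) (j : Fin 3) (hj : w j ≠ 0)
    (ho : ∀ l, l ≠ j → w l = 0) : (Matrix.diagonal w).rank = 1 := by
  rw [Matrix.rank_diagonal]
  rw [Fintype.card_eq_one_iff]
  refine ⟨⟨j, hj⟩, ?_⟩
  rintro ⟨l, hl⟩
  have : l = j := by by_contra h; exact hl (ho l h)
  simp [this]

theorem stmt_15 (k i : ℕ) (hk : 1 ≤ k) (hi : 1 ≤ i) :
    letI μ : ℝ := ((i : ℝ) - (k : ℝ)⁻¹) / ((i : ℝ) - ((k : ℝ) + 1)⁻¹)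
    letI A : Matrix (Fin 3) (Fin 3) ℝ :=
      Matrix.diagonal ![(k : ℝ)⁻¹, (k : ℝ)⁻¹, (i : ℝ)]
    letI D₁ : Matrix (Fin 3) (Fin 3) ℝ :=
      Matrix.diagonal ![((k : ℝ) + 1)⁻¹, ((k : ℝ) + 1)⁻¹, (i : ℝ)]
    letI D₂ : Matrix (Fin 3) (Fin 3) ℝ :=
      Matrix.diagonal ![((k : ℝ) + 1)⁻¹, (i : ℝ), (i : ℝ)]
    letI D₃ : Matrix (Fin 3) (Fin 3) ℝ :=
      Matrix.diagonal ![(i : ℝ), (k : ℝ)⁻¹, (i : ℝ)]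
    A = (μ ^ 2) • D₁ + (μ * (1 - μ)) • D₂ + (1 - μ) • D₃ ∧
    μ ^ 2 + μ * (1 - μ) + (1 - μ) = 1 ∧
    0 ≤ μ ^ 2 ∧ 0 ≤ μ * (1 - μ) ∧ 0 ≤ 1 - μ ∧
    (D₂ - D₁).rank = 1 ∧
    (Matrix.diagonal ![((k : ℝ) + 1)⁻¹, (k : ℝ)⁻¹, (i : ℝ)] - D₃).rank = 1 := by
  set μ : ℝ := ((i : ℝ) - (k : ℝ)⁻¹) / ((i : ℝ) - ((k : ℝ) + 1)⁻¹) with hμdefn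
  have hk0 : (0:ℝ) < (k:ℝ) := by exact_mod_cast hk
  have hi1 : (1:ℝ) ≤ (i:ℝ) := by exact_mod_cast hi
  have hk1 : (0:ℝ) < (k:ℝ) + 1 := by linarith
  have hkinv : (k:ℝ)⁻¹ ≤ 1 := by
    rw [inv_le_one_iff₀]; right; exact_mod_cast hk
  have hk1inv : ((k:ℝ)+1)⁻¹ < 1 := by
    rw [inv_lt_one_iff₀]; right; linarith
  have hinvlt : ((k:ℝ)+1)⁻¹ < (k:ℝ)⁻¹ := by
    apply inv_strictAnti₀ hk0; linarith
  have hden : (0:ℝ) < (i:ℝ) - ((k:ℝ)+1)⁻¹ := by linarith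
  have hnum : (0:ℝ) ≤ (i:ℝ) - (k:ℝ)⁻¹ := by linarith
  have hμ0 : 0 ≤ μ := div_nonneg hnum hden.le
  have hμ1 : μ ≤ 1 := by
    rw [div_le_one hden]; linarith
  have hμdef : μ * ((i:ℝ) - ((k:ℝ)+1)⁻¹) = (i:ℝ) - (k:ℝ)⁻¹ :=
    div_mul_cancel₀ _ hden.ne'
  clear hμdefn
  clear_value μ
  refine ⟨?_, by ring, sq_nonneg μ, mul_nonneg hμ0 (by linarith), by linarith, ?_, ?_⟩
  · simp only [← Matrix.diagonal_smul, Matrix.diagonal_add]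
    refine congrArg Matrix.diagonal (funext fun a => ?_)
    fin_cases a <;> simp [Pi.smul_apply, smul_eq_mul]
    · linear_combination hμdef
    · linear_combination μ * hμdef
    · ring
  · rw [Matrix.diagonal_sub]
    apply rank_diag_one _ 1
    · simp; intro h; linarith
    · intro l hl; fin_cases l <;> simp_all
  · rw [Matrix.diagonal_sub]
    apply rank_diag_one _ 0
    · simp; intro h; linarith
    · intro l hl; fin_cases l <;> simp_all
end
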